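/- arXiv:1311.1930 — 5 statements merged into one kernel-verified Lean document; each statement's English description precedes it below -/
import Mathlib

section
/- For N ≥ 7, the sequences defined by (x_{k+1}, y_{k+1}) = (x_k + y_k, (N−6)x_k + (N−5)y_k) with initial values x₂ = 3, y₂ = 3(N−4) have closed form x_k = (3/√(N−6))(Φ₁^{2k−3} + Φ₂^{2k−3}) and y_k = 3(Φ₁^{2k−2} + Φ₂^{2k−2}) for all k ≥ 2, where Φ₁ = (√(N−6)+√(N−2))/2 and Φ₂ = (√(N−6)−√(N−2))/2. -/
/-!
Φ₁ and Φ₂ are the two roots of `φ² = s φ + 1` with `s = √(N−6)`, so the power sums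
`Lₙ = Φ₁ⁿ + Φ₂ⁿ` satisfy `Lₙ₊₂ = s Lₙ₊₁ + Lₙ`. Since `N − 6 = s²` and `N − 5 = s² + 1`, two steps
of this recurrence are exactly one step of the recurrence for `(x, y)`, and the initial values
match because `L₁ = s` and `L₂ = s² + 2`.
-/

theorem add_div_two_sq_eq {K : Type*} [Field K] [NeZero (2 : K)] {s t : K}
    (ht : t ^ 2 = s ^ 2 + 4) : ((s + t) / 2) ^ 2 = s * ((s + t) / 2) + 1 := by
  field_simp
  linear_combination ht

theorem pow_add_two_add_pow_add_two {R : Type*} [CommRing R] {s a b : R}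
    (ha : a ^ 2 = s * a + 1) (hb : b ^ 2 = s * b + 1) (n : ℕ) :
    a ^ (n + 2) + b ^ (n + 2) = s * (a ^ (n + 1) + b ^ (n + 1)) + (a ^ n + b ^ n) := by
  linear_combination a ^ n * ha + b ^ n * hb

theorem closed_form_of_rec {K : Type*} [Field K] {s a b c : K} (hs : s ≠ 0)
    (ha : a ^ 2 = s * a + 1) (hb : b ^ 2 = s * b + 1) {x y : ℕ → K}
    (hx2 : x 2 = c / s * (a + b)) (hy2 : y 2 = c * (a ^ 2 + b ^ 2))
    (hrec : ∀ k, 2 ≤ k → x (k + 1) = x k + y k ∧ y (k + 1) = s ^ 2 * x k + (s ^ 2 + 1) * y k)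
    (m : ℕ) :
    x (m + 2) = c / s * (a ^ (2 * m + 1) + b ^ (2 * m + 1)) ∧
      y (m + 2) = c * (a ^ (2 * m + 2) + b ^ (2 * m + 2)) := by
  induction m with
  | zero => simpa using ⟨hx2, hy2⟩
  | succ m ih =>
    obtain ⟨hx, hy⟩ := ih
    obtain ⟨hx', hy'⟩ := hrec (m + 2) (by omega)
    have hL3 := pow_add_two_add_pow_add_two ha hb (2 * m + 1)
    have hL4 := pow_add_two_add_pow_add_two ha hb (2 * m + 2)
    rw [show m + 1 + 2 = m + 2 + 1 by ring, hx', hy', hx, hy,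
      show 2 * (m + 1) + 1 = 2 * m + 1 + 2 by ring, show 2 * (m + 1) + 2 = 2 * m + 2 + 2 by ring,
      hL3, hL4, hL3]
    constructor
    · field_simp
      ring
    · field_simp
      ring

theorem stmt_6 (N : ℕ) (hN : 7 ≤ N)
    (Phi1 Phi2 : ℝ)
    (h1 : Phi1 = (Real.sqrt ((N : ℝ) - 6) + Real.sqrt ((N : ℝ) - 2)) / 2)
    (h2 : Phi2 = (Real.sqrt ((N : ℝ) - 6) - Real.sqrt ((N : ℝ) - 2)) / 2)
    (x y : ℕ → ℝ)
    (hx2 : x 2 = 3) (hy2 : y 2 = 3 * ((N : ℝ) - 4))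
    (hrec : ∀ k : ℕ, 2 ≤ k →
      x (k + 1) = x k + y k ∧ y (k + 1) = ((N : ℝ) - 6) * x k + ((N : ℝ) - 5) * y k) :
    ∀ k : ℕ, 2 ≤ k →
      x k = (3 / Real.sqrt ((N : ℝ) - 6)) * (Phi1 ^ (2 * k - 3) + Phi2 ^ (2 * k - 3)) ∧
      y k = 3 * (Phi1 ^ (2 * k - 2) + Phi2 ^ (2 * k - 2)) := by
  have hN7 : (7 : ℝ) ≤ N := by exact_mod_cast hN
  set s := Real.sqrt ((N : ℝ) - 6)
  set t := Real.sqrt ((N : ℝ) - 2)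
  have hs2 : s ^ 2 = N - 6 := Real.sq_sqrt (by linarith)
  have ht2 : t ^ 2 = s ^ 2 + 4 := by rw [Real.sq_sqrt (by linarith), hs2]; ring
  have hs : s ≠ 0 := (Real.sqrt_pos.mpr (by linarith)).ne'
  have hPhi1 : Phi1 ^ 2 = s * Phi1 + 1 := h1 ▸ add_div_two_sq_eq ht2
  have hPhi2 : Phi2 ^ 2 = s * Phi2 + 1 := by
    rw [h2, sub_eq_add_neg]; exact add_div_two_sq_eq (by rw [neg_sq, ht2])
  have hsum : Phi1 + Phi2 = s := by rw [h1, h2]; ring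
  have hsq : Phi1 ^ 2 + Phi2 ^ 2 = N - 4 := by
    rw [hPhi1, hPhi2]; linear_combination s * hsum + hs2
  intro k hk
  obtain ⟨m, rfl⟩ := Nat.exists_eq_add_of_le' hk
  rw [show 2 * (m + 2) - 3 = 2 * m + 1 by omega, show 2 * (m + 2) - 2 = 2 * m + 2 by omega]
  refine closed_form_of_rec hs hPhi1 hPhi2 ?_ ?_ ?_ m
  · rw [hx2, hsum, div_mul_cancel₀ _ hs]
  · rw [hy2, hsq]
  · intro k hk
    rw [hs2, show (N : ℝ) - 6 + 1 = N - 5 by ring]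
    exact hrec k hk
end

section
/- For N ≥ 7, the vector (x_k^s, y_k^s) = Σ_{i=0}^{k−2} A^i (1,0)ᵀ, where A = [[1,1],[N−6,N−5]], has closed form x_k^s = 1 + (Φ₁^{2k−4} − Φ₂^{2k−4})/√((N−6)(N−2)) and y_k^s = −1 + (Φ₁^{2k−3} − Φ₂^{2k−3})/√(N−2) for all k ≥ 2. -/
/-!
Φ₁ and Φ₂ are the roots of X² - √(N-6) X - 1, and Φ₁ - Φ₂ = √(N-2). Writing s = √(N-6), the
matrix A is [[1, 1], [s², s² + 1]], and the partial sums of A^i (1,0)ᵀ obey v ↦ A v + (1,0)ᵀ.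
The Lucas sequence U n = (Φ₁ⁿ - Φ₂ⁿ)/(Φ₁ - Φ₂), with U (n+2) = s U (n+1) + U n, makes
(1 + U (2j) / s, -1 + U (2j+1)) a solution of the same recursion with the same initial value.
-/

open Finset Matrix

theorem Matrix.sum_range_succ_pow_mulVec {n R : Type*} [Fintype n] [DecidableEq n]
    [CommSemiring R] (A : Matrix n n R) (u : n → R) (k : ℕ) :
    ∑ i ∈ range (k + 1), (A ^ i) *ᵥ u = A *ᵥ (∑ i ∈ range k, (A ^ i) *ᵥ u) + u := by
  simp only [sum_range_succ', mulVec_sum, mulVec_mulVec, pow_succ', pow_zero, one_mulVec]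

section Lucas

variable {K : Type*} [Field K]

def lucasU (φ ψ : K) (n : ℕ) : K := (φ ^ n - ψ ^ n) / (φ - ψ)

theorem lucasU_zero (φ ψ : K) : lucasU φ ψ 0 = 0 := by
  simp [lucasU]

theorem lucasU_one {φ ψ : K} (h : φ ≠ ψ) : lucasU φ ψ 1 = 1 := by
  simp [lucasU, sub_ne_zero.mpr h]

theorem lucasU_add_two (φ ψ : K) (n : ℕ) :
    lucasU φ ψ (n + 2) = (φ + ψ) * lucasU φ ψ (n + 1) - φ * ψ * lucasU φ ψ n := by
  simp only [lucasU]
  ring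

/-- The claimed closed form of the `j + 2`-nd partial sum, with `φ + ψ` in the role of `√(N-6)`. -/
def lucasPartialSum (φ ψ : K) (j : ℕ) : Fin 2 → K :=
  ![1 + lucasU φ ψ (2 * j) / (φ + ψ), -1 + lucasU φ ψ (2 * j + 1)]

variable {φ ψ : K}

theorem lucasPartialSum_zero (hne : φ ≠ ψ) : lucasPartialSum φ ψ 0 = ![1, 0] := by
  simp [lucasPartialSum, lucasU_zero, lucasU_one hne]

theorem lucasPartialSum_succ (hprod : φ * ψ = -1) (hsum : φ + ψ ≠ 0) (j : ℕ) :
    lucasPartialSum φ ψ (j + 1) =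
      !![1, 1; (φ + ψ) ^ 2, (φ + ψ) ^ 2 + 1] *ᵥ lucasPartialSum φ ψ j + ![1, 0] := by
  have hU (n : ℕ) : lucasU φ ψ (n + 2) = (φ + ψ) * lucasU φ ψ (n + 1) + lucasU φ ψ n := by
    rw [lucasU_add_two, hprod]; ring
  simp only [lucasPartialSum, mulVec_fin_two, vec2_add, of_apply, cons_val_zero, cons_val_one,
    cons_val_fin_one]
  refine vec2_eq ?_ ?_
  · rw [show 2 * (j + 1) = 2 * j + 2 by ring, hU]
    field_simp
    ring
  · rw [show 2 * (j + 1) + 1 = 2 * j + 1 + 2 by ring, hU, hU]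
    field_simp
    ring

theorem sum_range_pow_mulVec_eq_lucasPartialSum (hprod : φ * ψ = -1) (hsum : φ + ψ ≠ 0)
    (hne : φ ≠ ψ) (j : ℕ) :
    ∑ i ∈ range (j + 1), (!![1, 1; (φ + ψ) ^ 2, (φ + ψ) ^ 2 + 1] ^ i) *ᵥ ![1, 0] =
      lucasPartialSum φ ψ j := by
  induction j with
  | zero => simp [lucasPartialSum_zero hne]
  | succ j ih => rw [sum_range_succ_pow_mulVec, ih, lucasPartialSum_succ hprod hsum]

end Lucas

theorem stmt_10 (N : ℕ) (hN : 7 ≤ N)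
    (Phi1 Phi2 : ℝ)
    (h1 : Phi1 = (Real.sqrt ((N : ℝ) - 6) + Real.sqrt ((N : ℝ) - 2)) / 2)
    (h2 : Phi2 = (Real.sqrt ((N : ℝ) - 6) - Real.sqrt ((N : ℝ) - 2)) / 2)
    (A : Matrix (Fin 2) (Fin 2) ℝ)
    (hA : A = !![1, 1; (N : ℝ) - 6, (N : ℝ) - 5])
    (v : ℕ → Fin 2 → ℝ)
    (hv : ∀ k : ℕ, v k = ∑ i ∈ Finset.range (k - 1), (A ^ i).mulVec ![1, 0]) :
    ∀ k : ℕ, 2 ≤ k →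
      v k 0 = 1 + (Phi1 ^ (2 * k - 4) - Phi2 ^ (2 * k - 4)) /
          Real.sqrt (((N : ℝ) - 6) * ((N : ℝ) - 2)) ∧
      v k 1 = -1 + (Phi1 ^ (2 * k - 3) - Phi2 ^ (2 * k - 3)) / Real.sqrt ((N : ℝ) - 2) := by
  rintro k hk
  obtain ⟨j, rfl⟩ : ∃ j, k = j + 2 := ⟨k - 2, by omega⟩
  have hN' : (7 : ℝ) ≤ N := by exact_mod_cast hN
  set s := Real.sqrt ((N : ℝ) - 6)
  set t := Real.sqrt ((N : ℝ) - 2)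
  have hs2 : s ^ 2 = (N : ℝ) - 6 := Real.sq_sqrt (by linarith)
  have ht2 : t ^ 2 = (N : ℝ) - 2 := Real.sq_sqrt (by linarith)
  have hsum : Phi1 + Phi2 = s := by rw [h1, h2]; ring
  have hdiff : Phi1 - Phi2 = t := by rw [h1, h2]; ring
  have hprod : Phi1 * Phi2 = -1 := by rw [h1, h2]; linear_combination (hs2 - ht2) / 4
  have hs : s ≠ 0 := (Real.sqrt_pos.mpr (by linarith)).ne'
  have ht : t ≠ 0 := (Real.sqrt_pos.mpr (by linarith)).ne'
  have hA' : A = !![1, 1; (Phi1 + Phi2) ^ 2, (Phi1 + Phi2) ^ 2 + 1] := by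
    rw [hA, hsum, hs2, show (N : ℝ) - 5 = N - 6 + 1 by ring]
  have hvj : v (j + 2) = lucasPartialSum Phi1 Phi2 j := by
    rw [hv, hA', show j + 2 - 1 = j + 1 by omega]
    exact sum_range_pow_mulVec_eq_lucasPartialSum hprod (hsum ▸ hs) (sub_ne_zero.mp (hdiff ▸ ht)) j
  rw [hvj, show 2 * (j + 2) - 4 = 2 * j by omega, show 2 * (j + 2) - 3 = 2 * j + 1 by omega,
    show Real.sqrt (((N : ℝ) - 6) * ((N : ℝ) - 2)) = s * t from Real.sqrt_mul (by linarith) _,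
    div_mul_eq_div_div_swap]
  simp [lucasPartialSum, lucasU, hsum, hdiff]
end

section
/- For integers M, N ≥ 4 with 1/M + 1/N < 1/2, the quantity q_k = (M/√(b²−4))·[(b+1)(α₁^{2k−2} − α₂^{2k−2}) − (α₁^{2k−4} − α₂^{2k−4})] is a positive integer divisible by M for every k ≥ 2. -/
def vseq (B : ℤ) : ℕ → ℤ
  | 0 => 0
  | 1 => 1
  | (n+2) => B * vseq B (n+1) - vseq B n

lemma vseq_prop (B : ℤ) (hB : 2 ≤ B) : ∀ n, 0 ≤ vseq B n ∧ vseq B n ≤ vseq B (n+1) := by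
  intro n
  induction n with
  | zero => simp [vseq]
  | succ m ih =>
    obtain ⟨h0, h1⟩ := ih
    refine ⟨le_trans h0 h1, ?_⟩
    show vseq B (m+1) ≤ B * vseq B (m+1) - vseq B m
    nlinarith

lemma vseq_one_le (B : ℤ) (hB : 2 ≤ B) (n : ℕ) : 1 ≤ vseq B (n+1) := by
  induction n with
  | zero => simp [vseq]
  | succ m ih =>
    have h := (vseq_prop B hB (m+1)).2
    linarith

theorem stmt_14 (M N : ℕ) (hM : 4 ≤ M) (hN : 4 ≤ N)
    (hMN : (1 : ℝ) / M + 1 / N < 1 / 2)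
    (b : ℝ) (hb : b = ((M : ℝ) - 2) * ((N : ℝ) - 2) - 2)
    (a1 a2 : ℝ)
    (h1 : a1 = (Real.sqrt (b - 2) + Real.sqrt (b + 2)) / 2)
    (h2 : a2 = (Real.sqrt (b - 2) - Real.sqrt (b + 2)) / 2)
    (q : ℕ → ℝ)
    (hq : ∀ k : ℕ, q k = ((M : ℝ) / Real.sqrt (b ^ 2 - 4)) *
        ((b + 1) * (a1 ^ (2 * k - 2) - a2 ^ (2 * k - 2))
          - (a1 ^ (2 * k - 4) - a2 ^ (2 * k - 4)))) :
    ∀ k : ℕ, 2 ≤ k → ∃ m : ℕ, 0 < m ∧ q k = (m : ℝ) ∧ M ∣ m := by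
  -- basic positivity
  have hM4 : (4:ℝ) ≤ (M:ℝ) := by exact_mod_cast hM
  have hN4 : (4:ℝ) ≤ (N:ℝ) := by exact_mod_cast hN
  have hM0 : (0:ℝ) < M := by linarith
  have hN0 : (0:ℝ) < N := by linarith
  -- B : ℤ
  set B : ℤ := ((M:ℤ) - 2) * ((N:ℤ) - 2) - 2 with hBdef
  have hbB : b = (B : ℝ) := by rw [hb, hBdef]; push_cast; ring
  rw [div_add_div _ _ hM0.ne' hN0.ne', div_lt_div_iff₀ (by positivity) (by norm_num)] at hMN
  have hBreal : (2:ℝ) < (B:ℝ) := by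
    push_cast
    nlinarith
  have hB2 : (2:ℤ) < B := by exact_mod_cast hBreal
  have hB3 : (3:ℤ) ≤ B := hB2
  have hb3 : (3:ℝ) ≤ b := by rw [hbB]; exact_mod_cast hB3
  -- sqrt facts
  set s : ℝ := Real.sqrt (b^2 - 4) with hsdef
  have hs2 : s^2 = b^2 - 4 := Real.sq_sqrt (by nlinarith)
  have hs0 : 0 < s := Real.sqrt_pos.mpr (by nlinarith)
  have hm2 : Real.sqrt (b-2)^2 = b - 2 := Real.sq_sqrt (by linarith)
  have hp2 : Real.sqrt (b+2)^2 = b + 2 := Real.sq_sqrt (by linarith)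
  have hsq : Real.sqrt (b-2) * Real.sqrt (b+2) = s := by
    rw [hsdef, ← Real.sqrt_mul (by linarith)]
    congr 1
    ring
  have hx : a1^2 = (b + s)/2 := by
    rw [h1]; linear_combination hm2/4 + hp2/4 + hsq/2
  have hy : a2^2 = (b - s)/2 := by
    rw [h2]; linear_combination hm2/4 + hp2/4 - hsq/2
  have hsum : a1^2 + a2^2 = b := by rw [hx, hy]; ring
  have hprod : a1^2 * a2^2 = 1 := by rw [hx, hy]; linear_combination -hs2/4
  -- key identity
  have key : ∀ n : ℕ, a1^(2*n) - a2^(2*n) = (vseq B n : ℝ) * s ∧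
      a1^(2*(n+1)) - a2^(2*(n+1)) = (vseq B (n+1) : ℝ) * s := by
    intro n
    induction n with
    | zero =>
      constructor
      · simp [vseq]
      · have hv1' : vseq B 1 = 1 := rfl
        rw [hv1', Int.cast_one, one_mul]
        have : a1 ^ (2*(0+1)) = a1^2 := by norm_num
        have h2' : a2 ^ (2*(0+1)) = a2^2 := by norm_num
        rw [this, h2']
        linear_combination hx - hy
    | succ m ih =>
      obtain ⟨ih0, ih1⟩ := ih
      refine ⟨ih1, ?_⟩
      have hrec : vseq B (m+2) = B * vseq B (m+1) - vseq B m := rfl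
      have e1 : a1^(2*(m+2)) = a1^(2*(m+1)) * a1^2 := by ring
      have e2 : a2^(2*(m+2)) = a2^(2*(m+1)) * a2^2 := by ring
      have e3 : a1^(2*(m+1)) = a1^(2*m) * a1^2 := by ring
      have e4 : a2^(2*(m+1)) = a2^(2*m) * a2^2 := by ring
      rw [hrec]
      push_cast
      rw [e1, e2, ← hbB]
      -- a1^{2(m+1)}*a1^2 - a2^{2(m+1)}*a2^2 = (b * v(m+1) - v m) * s
      have hB' : (B:ℝ) = b := hbB.symm
      linear_combination (a1^2+a2^2)*ih1 - (a1^2*a2^2)*ih0 +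
        ((vseq B (m+1) : ℝ)*s)*hsum - ((vseq B m : ℝ)*s)*hprod
  -- main
  intro k hk
  obtain ⟨j, rfl⟩ : ∃ j, k = j + 2 := ⟨k - 2, by omega⟩
  set W : ℤ := (M:ℤ) * ((B+1) * vseq B (j+1) - vseq B j) with hWdef
  have hv0 := (key j).1
  have hv1 := (key j).2
  have hprop := vseq_prop B (by linarith) j
  have hone := vseq_one_le B (by linarith) j
  have hMZ : (4:ℤ) ≤ (M:ℤ) := by exact_mod_cast hM
  have hWpos : 0 < W := by
    have h1' : 0 < (B+1) * vseq B (j+1) - vseq B j := by nlinarith [hprop.1, hprop.2]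
    have hMZ' : (0:ℤ) < (M:ℤ) := by omega
    rw [hWdef]
    exact mul_pos hMZ' h1'
  have hqval : q (j+2) = ((W:ℤ):ℝ) := by
    rw [hq]
    have e2 : 2 * (j+2) - 2 = 2 * (j+1) := by omega
    have e4 : 2 * (j+2) - 4 = 2 * j := by omega
    rw [e2, e4, hv0, hv1, hWdef, hbB]
    push_cast
    field_simp
  refine ⟨W.toNat, ?_, ?_, ?_⟩
  · omega
  · rw [hqval]
    congr 1
    exact_mod_cast (Int.toNat_of_nonneg hWpos.le).symm
  · have hdvd : (M:ℤ) ∣ W := Dvd.intro _ rfl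
    rw [← Int.natCast_dvd_natCast]
    rwa [Int.toNat_of_nonneg hWpos.le]
end

section
/- For integers M, N ≥ 4 with 1/M + 1/N < 1/2, let q_k and p_k be given by the closed-form expressions q_k = (M/√(b²−4))[(b+1)(α₁^{2k−2}−α₂^{2k−2}) − (α₁^{2k−4}−α₂^{2k−4})] and p_k = q_k/M + ((M−2)/((b−2)√(b+2)))[(b−1)(α₁^{2k−3}−α₂^{2k−3}) − (α₁^{2k−5}−α₂^{2k−5})]. Then lim_{k→∞} p_k/q_k = 1/M + ((M−2)/(M√(b−2)·α₁))·((b−1)α₁² − 1)/((b+1)α₁² − 1). -/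
/-!
Since `α₁ > 1` and `α₂ = -1/α₁`, we have `|α₂| < α₁`, so after dividing by `α₁ ^ (2k)` every
difference `α₁ ^ (2k - m) - α₂ ^ (2k - m)` tends to `α₁⁻ᵐ`. Hence `q_k / α₁ ^ (2k)` and
`p_k / α₁ ^ (2k)` converge to explicit constants, the first of them positive, and the limit of
`p_k / q_k` is their ratio; `√(b² - 4) = √(b - 2) √(b + 2)` simplifies it to the stated form.
-/

open Filter Topology

theorem four_lt_sub_two_mul_sub_two {M N : ℝ} (hM : 0 < M) (hN : 0 < N)
    (h : 1 / M + 1 / N < 1 / 2) : 4 < (M - 2) * (N - 2) := by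
  rw [div_add_div _ _ hM.ne' hN.ne', div_lt_div_iff₀ (by positivity) two_pos] at h
  nlinarith

theorem one_lt_sqrt_sub_two_add_sqrt_add_two_div_two {b : ℝ} (hb : 2 < b) :
    1 < (√(b - 2) + √(b + 2)) / 2 := by
  have h₁ : 0 < √(b - 2) := Real.sqrt_pos.2 (sub_pos.2 hb)
  have h₂ : 2 ≤ √(b + 2) := (Real.le_sqrt' two_pos).2 (by linarith)
  linarith

theorem abs_neg_one_div_lt_self {a : ℝ} (ha : 1 < a) : |-1 / a| < a := by
  rw [neg_div, abs_neg, abs_of_pos (one_div_pos.2 (zero_lt_one.trans ha))]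
  exact ((div_lt_one (zero_lt_one.trans ha)).2 ha).trans ha

theorem tendsto_pow_sub_pow_div_pow {x y : ℝ} (hxy : |y| < x) (m : ℕ) :
    Tendsto (fun n ↦ (x ^ (n - m) - y ^ (n - m)) / x ^ n) atTop (𝓝 (x ^ m)⁻¹) := by
  have hx : 0 < x := (abs_nonneg y).trans_lt hxy
  have hr : |y / x| < 1 := by rwa [abs_div, abs_of_pos hx, div_lt_one hx]
  have hlim : Tendsto (fun n ↦ (1 - (y / x) ^ (n - m)) * (x ^ m)⁻¹) atTop
      (𝓝 ((1 - 0) * (x ^ m)⁻¹)) :=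
    (((tendsto_pow_atTop_nhds_zero_of_abs_lt_one hr).comp
      (tendsto_sub_atTop_nat m)).const_sub 1).mul_const _
  rw [sub_zero, one_mul] at hlim
  refine hlim.congr' ((eventually_ge_atTop m).mono fun n hn ↦ ?_)
  obtain ⟨j, rfl⟩ := Nat.exists_eq_add_of_le hn
  simp only [Nat.add_sub_cancel_left, pow_add, div_pow]
  field_simp

theorem Filter.Tendsto.div_of_div_common {α : Type*} {l : Filter α} {f g w : α → ℝ} {x y : ℝ}
    (hf : Tendsto (fun k ↦ f k / w k) l (𝓝 x)) (hg : Tendsto (fun k ↦ g k / w k) l (𝓝 y))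
    (hy : y ≠ 0) (hw : ∀ k, w k ≠ 0) : Tendsto (fun k ↦ f k / g k) l (𝓝 (x / y)) :=
  (hf.div hg hy).congr fun k ↦ div_div_div_cancel_right₀ (hw k) (f k) (g k)

theorem leading_coeff_ratio_eq {M b a s t : ℝ} (hM : M ≠ 0) (hb : b - 2 ≠ 0) (hs : s ^ 2 = b - 2)
    (ht : t ≠ 0) (ha : a ≠ 0) (hden : (b + 1) * a ^ 2 - 1 ≠ 0) :
    (M / (s * t) * ((b + 1) * (a ^ 2)⁻¹ - (a ^ 4)⁻¹) / M
        + (M - 2) / ((b - 2) * t) * ((b - 1) * (a ^ 3)⁻¹ - (a ^ 5)⁻¹))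
      / (M / (s * t) * ((b + 1) * (a ^ 2)⁻¹ - (a ^ 4)⁻¹))
      = 1 / M + (M - 2) / (M * s * a) * (((b - 1) * a ^ 2 - 1) / ((b + 1) * a ^ 2 - 1)) := by
  have hs0 : s ≠ 0 := by
    rintro rfl
    exact hb (by linear_combination -hs)
  field_simp
  linear_combination (M - 2) * (a ^ 2 * (b - 1) - 1) * hs

theorem stmt_15 (M N : ℕ) (hM : 4 ≤ M) (hN : 4 ≤ N)
    (hMN : (1 : ℝ) / M + 1 / N < 1 / 2)
    (b : ℝ) (hb : b = ((M : ℝ) - 2) * ((N : ℝ) - 2) - 2)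
    (a1 a2 : ℝ)
    (h1 : a1 = (Real.sqrt (b - 2) + Real.sqrt (b + 2)) / 2)
    (h2 : a2 = -1 / a1)
    (q p : ℕ → ℝ)
    (hq : ∀ k : ℕ, q k = ((M : ℝ) / Real.sqrt (b ^ 2 - 4)) *
        ((b + 1) * (a1 ^ (2 * k - 2) - a2 ^ (2 * k - 2))
          - (a1 ^ (2 * k - 4) - a2 ^ (2 * k - 4))))
    (hp : ∀ k : ℕ, p k = q k / M + (((M : ℝ) - 2) / ((b - 2) * Real.sqrt (b + 2))) *
        ((b - 1) * (a1 ^ (2 * k - 3) - a2 ^ (2 * k - 3))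
          - (a1 ^ (2 * k - 5) - a2 ^ (2 * k - 5)))) :
    Filter.Tendsto (fun k : ℕ => p k / q k) Filter.atTop
      (nhds (1 / (M : ℝ) + (((M : ℝ) - 2) / ((M : ℝ) * Real.sqrt (b - 2) * a1)) *
        (((b - 1) * a1 ^ 2 - 1) / ((b + 1) * a1 ^ 2 - 1)))) := by
  have hM0 : (0 : ℝ) < M := Nat.cast_pos.2 (by omega)
  have hb2 : 2 < b := by
    linarith [four_lt_sub_two_mul_sub_two hM0 (Nat.cast_pos.2 (by omega)) hMN]
  have hs1 : 0 < √(b - 2) := Real.sqrt_pos.2 (by linarith)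
  have hs2 : 0 < √(b + 2) := Real.sqrt_pos.2 (by linarith)
  have ha1 : 1 < a1 := h1 ▸ one_lt_sqrt_sub_two_add_sqrt_add_two_div_two hb2
  have ha2 : |a2| < a1 := h2 ▸ abs_neg_one_div_lt_self ha1
  have hu (m : ℕ) : Tendsto (fun k ↦ (a1 ^ (2 * k - m) - a2 ^ (2 * k - m)) / a1 ^ (2 * k))
      atTop (𝓝 (a1 ^ m)⁻¹) :=
    (tendsto_pow_sub_pow_div_pow ha2 m).comp (tendsto_id.const_mul_atTop' two_pos)
  have hsq : √(b ^ 2 - 4) = √(b - 2) * √(b + 2) := by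
    rw [← Real.sqrt_mul (by linarith)]
    ring_nf
  set Q := (M / (√(b - 2) * √(b + 2))) * ((b + 1) * (a1 ^ 2)⁻¹ - (a1 ^ 4)⁻¹)
  have hQ : Tendsto (fun k ↦ q k / a1 ^ (2 * k)) atTop (𝓝 Q) := by
    refine ((((hu 2).const_mul (b + 1)).sub (hu 4)).const_mul _).congr fun k ↦ ?_
    rw [hq, hsq]
    ring
  have hP : Tendsto (fun k ↦ p k / a1 ^ (2 * k)) atTop
      (𝓝 (Q / M + ((M - 2) / ((b - 2) * √(b + 2))) * ((b - 1) * (a1 ^ 3)⁻¹ - (a1 ^ 5)⁻¹))) := by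
    refine ((hQ.div_const _).add ((((hu 3).const_mul (b - 1)).sub (hu 5)).const_mul _)).congr
      fun k ↦ ?_
    rw [hp]
    ring
  have hden : 0 < (b + 1) * a1 ^ 2 - 1 := by nlinarith
  have hQ0 : Q ≠ 0 := by
    have : 0 < (b + 1) * (a1 ^ 2)⁻¹ - (a1 ^ 4)⁻¹ := by
      field_simp
      nlinarith
    exact (mul_pos (div_pos hM0 (mul_pos hs1 hs2)) this).ne'
  rw [← leading_coeff_ratio_eq hM0.ne' (by linarith) (Real.sq_sqrt (by linarith)) hs2.ne'
    (by positivity) hden.ne']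
  exact hP.div_of_div_common hQ hQ0 fun k ↦ pow_ne_zero _ (by positivity)
end

section
/- When M = N = n (for n ≥ 5 with 2/n < 1/2, i.e., n ≥ 5), the rotation number formula 1/M + ((M−2)/(M√(b−2)·α₁))·((b−1)α₁²−1)/((b+1)α₁²−1) with b = (n−2)²−2 equals (n − √(n(n−4)))/(2n). -/
/-! With `m = n - 2` and `s = √(n (n - 4))` we have `b - 2 = m² - 4 = s²` and `b + 2 = m²`, so
`α₁ = (s + m) / 2` has inverse `(m - s) / 2`. Hence `α₁ + α₁⁻¹ = m`, `α₁ - α₁⁻¹ = s` and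
`b = α₁² + α₁⁻²`; in these terms the ratio in the formula collapses to `s / m`, the second summand
to `(α₁⁻¹) / n = (m - s) / (2n)`, and the sum to `(n - s) / (2n)`. -/

open Real

theorem inv_half_add_eq_half_sub {m s : ℝ} (h : s ^ 2 = m ^ 2 - 4) :
    ((s + m) / 2)⁻¹ = (m - s) / 2 :=
  inv_eq_of_mul_eq_one_right (by linear_combination -h / 4)

theorem ratio_eq_of_eq_sq_add_inv_sq {K : Type*} [Field K] {a b : K} (ha : a ≠ 0) (hb : b = a ^ 2 + a⁻¹ ^ 2) :
    ((b - 1) * a ^ 2 - 1) / ((b + 1) * a ^ 2 - 1) = (a - a⁻¹) / (a + a⁻¹) := by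
  have hnum : (b - 1) * a ^ 2 - 1 = a ^ 3 * (a - a⁻¹) := by subst hb; field_simp; ring
  have hden : (b + 1) * a ^ 2 - 1 = a ^ 3 * (a + a⁻¹) := by subst hb; field_simp; ring
  rw [hnum, hden, mul_div_mul_left _ _ (pow_ne_zero 3 ha)]

theorem stmt_16 (n : ℕ) (hn : 5 ≤ n)
    (b : ℝ) (hb : b = ((n : ℝ) - 2) ^ 2 - 2)
    (a1 : ℝ) (h1 : a1 = (Real.sqrt (b - 2) + Real.sqrt (b + 2)) / 2) :
    1 / (n : ℝ) + (((n : ℝ) - 2) / ((n : ℝ) * Real.sqrt (b - 2) * a1)) *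
        (((b - 1) * a1 ^ 2 - 1) / ((b + 1) * a1 ^ 2 - 1))
      = ((n : ℝ) - Real.sqrt ((n : ℝ) * ((n : ℝ) - 4))) / (2 * n) := by
  have hn5 : (5 : ℝ) ≤ n := by exact_mod_cast hn
  set m : ℝ := (n : ℝ) - 2 with hm
  have hsqrt_add : √(b + 2) = m := by
    rw [hb, sub_add_cancel, sqrt_sq (by linarith)]
  have hsqrt_sub : √(b - 2) = √(n * (n - 4)) := by
    rw [hb, hm]; ring_nf
  set s := √(b - 2) with hs
  have hs_sq : s ^ 2 = m ^ 2 - 4 := by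
    rw [hs, sq_sqrt (by rw [hb]; nlinarith), hb]; ring
  have hs_pos : 0 < s := sqrt_pos.mpr (by rw [hb]; nlinarith)
  rw [hsqrt_add] at h1
  have hinv : a1⁻¹ = (m - s) / 2 := h1 ▸ inv_half_add_eq_half_sub hs_sq
  have ha1_pos : 0 < a1 := by rw [h1]; linarith
  have hb_eq : b = a1 ^ 2 + a1⁻¹ ^ 2 := by
    rw [hinv, h1, hb]; linear_combination -hs_sq / 2
  rw [ratio_eq_of_eq_sq_add_inv_sq ha1_pos.ne' hb_eq, ← hsqrt_sub,
    show a1 - a1⁻¹ = s by rw [hinv, h1]; ring, show a1 + a1⁻¹ = m by rw [hinv, h1]; ring]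
  have hm_pos : 0 < m := by linarith
  calc 1 / (n : ℝ) + m / (n * s * a1) * (s / m) = (1 + a1⁻¹) / n := by field_simp
    _ = (n - s) / (2 * n) := by rw [hinv, hm]; field_simp; ring
end
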